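/- arXiv:1612.05768 — 2 statements merged into one kernel-verified Lean document; each statement's English description precedes it below -/
import Mathlib

section
/- The normal words for the column braiding σ_C, i.e., words c1...ck in columns such that σ_C(c_j, c_{j+1}) = (c_j, c_{j+1}) for all j, are exactly the words of the form c1...cm e_C^α where c1 ≼_C c2 ≼_C ... ≼_C cm are non-empty columns in the column order (x1...xs ≼_C y1...yt iff s ≥ t and x_{i+s-t} ≤ y_i for all i ≤ t) and α ≥ 0. In particular they are in bijection with YT_A × ℕ, pairs of a Young tableau and a natural number. -/
variable {α : Type*} [LinearOrder α]

/-- Schensted insertion of a letter into a single row: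
returns the new row and the bumped letter, if any. -/
def rowInsert : List α → α → List α × Option α
  | [], x => ([x], none)
  | y :: r, x =>
    if y ≤ x then
      let p := rowInsert r x
      (y :: p.1, p.2)
    else (x :: r, some y)

/-- Schensted insertion of a letter into a tableau, whose rows are listed
from bottom to top. -/
def tabInsert : List (List α) → α → List (List α)
  | [], x => [[x]]
  | r :: t, x =>
    match rowInsert r x with
    | (r', none) => r' :: t
    | (r', some y) => r' :: tabInsert t y

/-- Iterated Schensted insertion of a word. -/
def insertWord (t : List (List α)) (w : List α) : List (List α) :=
  w.foldl tabInsert t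

/-- Row reading of a tableau: the rows, read from top to bottom. -/
def rowRead (t : List (List α)) : List α := t.reverse.flatten

/-- The tableau associated to a word by the Schensted algorithm. -/
def toTableau (w : List α) : List (List α) := insertWord [] w

/-- The Schensted (plactic) product of two tableaux. -/
def tabProd (t t' : List (List α)) : List (List α) := insertWord t (rowRead t')

/-- The row order: `u ≻_R l` iff `u` is at most as long as `l` and dominates
it entrywise strictly. -/
def RowDom (u l : List α) : Prop :=
  u.length ≤ l.length ∧
    ∀ i (hu : i < u.length) (hl : i < l.length), l.get ⟨i, hl⟩ < u.get ⟨i, hu⟩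

/-- A Young tableau: a bottom-to-top list of nonempty nondecreasing rows,
each row strictly dominating the one below it. -/
def IsTableau (t : List (List α)) : Prop :=
  (∀ r ∈ t, r ≠ [] ∧ r.Pairwise (· ≤ ·)) ∧ List.Chain' (fun low up => RowDom up low) t

/-- A row: a nondecreasing word. -/
def IsRow (r : List α) : Prop := r.Pairwise (· ≤ ·)

/-- A column: a strictly decreasing word. -/
def IsCol (c : List α) : Prop := c.Pairwise (· > ·)

/-- Number of columns of a tableau: the length of its bottom row. -/
def cols (t : List (List α)) : ℕ := (t.headD []).length

/-- The one-column tableau associated to a column, read from top to bottom. -/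
def colTab (c : List α) : List (List α) := c.reverse.map (fun x => [x])

/-- The `j`-th column of a tableau, read from top to bottom. -/
def colOf (t : List (List α)) (j : ℕ) : List α := t.reverse.filterMap (fun r => r[j]?)

/-- The column braiding: `σ_C (c₁, c₂)` consists of the two columns of the
tableau `c₁ * c₂` (the second one being empty if `c₁ * c₂` is a single column,
in which case the first one is the concatenated column `c₁c₂`). -/
def sigmaC (c1 c2 : List α) : List α × List α :=
  (colOf (tabProd (colTab c1) (colTab c2)) 0, colOf (tabProd (colTab c1) (colTab c2)) 1)

/-- The (zero- or) one-row tableau associated to a row. -/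
def rowTab (r : List α) : List (List α) := if r = [] then [] else [r]

/-- The row braiding: `σ_R (r₁, r₂)` is the pair (top row, bottom row) of the
tableau `r₁ * r₂`, the top row being empty if `r₁ * r₂` is a single row
(which is then the concatenation `r₁r₂`). -/
def sigmaR (r1 r2 : List α) : List α × List α :=
  ((tabProd (rowTab r1) (rowTab r2)).getD 1 [], (tabProd (rowTab r1) (rowTab r2)).getD 0 [])

/-- The left map `σ × Id` of the Yang–Baxter equation. -/
def map12 {X : Type*} (f : X → X → X × X) : X × X × X → X × X × X :=
  fun p => ((f p.1 p.2.1).1, (f p.1 p.2.1).2, p.2.2)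

/-- The right map `Id × σ` of the Yang–Baxter equation. -/
def map23 {X : Type*} (f : X → X → X × X) : X × X × X → X × X × X :=
  fun p => (p.1, f p.2.1 p.2.2)


/-- The column order: `x ≼_C y` iff `x` is at least as long as `y` and
`x (i + |x| - |y|) ≤ y i` for all `i < |y|`. -/
def ColLe (x y : List α) : Prop :=
  y.length ≤ x.length ∧
    ∀ i (hy : i < y.length) (hx : i + x.length - y.length < x.length),
      x.get ⟨i + x.length - y.length, hx⟩ ≤ y.get ⟨i, hy⟩

/-!
A column `c`, read as a one-column tableau, absorbs the strictly decreasing letters of a column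
`d` one at a time without ever growing a third column, and `σ_C (c, d)` reads back the two
columns of the result. If `c ≼_C d`, each letter of `d` lands in the second column next to an
entry of `c` it dominates, so `σ_C (c, d) = (c, d)`. Conversely the result is always a tableau,
and weakly increasing rows of a two-column tableau say exactly that its first column is
`≼_C` its second, so a fixed pair satisfies `c ≼_C d`. Thus normal words are the
`≼_C`-chains of columns, and since `e_C ≼_C d` forces `d = e_C` while `c ≼_C e_C` always holds,
these are the chains of non-empty columns followed by empty ones.
-/

section

variable {β : Type*}

theorem List.isChain_iff_exists_eq_append_replicate {R : β → β → Prop} {e : β}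
    (hl : ∀ y, R e y → y = e) (hr : ∀ x, R x e) {w : List β} :
    w.IsChain R ↔ ∃ (cs : List β) (a : ℕ), (∀ c ∈ cs, c ≠ e) ∧ cs.IsChain R ∧
      w = cs ++ List.replicate a e := by
  constructor
  · intro h
    induction w with
    | nil => exact ⟨[], 0, by simp, .nil, rfl⟩
    | cons c w ih =>
      obtain ⟨cs, a, hne, hcs, rfl⟩ := ih h.tail
      by_cases hc : c = e
      · subst hc
        cases cs with
        | nil => exact ⟨[], a + 1, by simp, .nil, by simp [List.replicate_succ]⟩
        | cons d cs => exact absurd (hl d (List.isChain_cons_cons.1 h).1) (hne d (by simp))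
      · refine ⟨c :: cs, a, List.forall_mem_cons.2 ⟨hc, hne⟩, ?_, rfl⟩
        cases cs with
        | nil => exact .singleton c
        | cons d cs => exact List.isChain_cons_cons.2 ⟨(List.isChain_cons_cons.1 h).1, hcs⟩
  · rintro ⟨cs, a, -, hcs, rfl⟩
    refine List.isChain_append.2 ⟨hcs, List.isChain_replicate_of_rel a (hr e), fun x _ y hy => ?_⟩
    rw [List.eq_of_mem_replicate (List.mem_of_mem_head? hy)]
    exact hr x

lemma List.forall₂_take_cons_of_pairwise [Preorder β] :
    ∀ {x : β} {l m : List β}, (x :: l).Pairwise (· ≤ ·) →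
      List.Forall₂ (· ≤ ·) (l.take m.length) m →
      List.Forall₂ (· ≤ ·) ((x :: l).take m.length) m
  | _, _, [], _, _ => by simp
  | x, c :: l, e :: m, hx, h => by
    obtain ⟨hce, h⟩ := List.forall₂_cons.1 h
    have hxc : x ≤ c := List.rel_of_pairwise_cons hx List.mem_cons_self
    exact List.forall₂_cons.2 ⟨hxc.trans hce, forall₂_take_cons_of_pairwise hx.of_cons h⟩

/-- The tableau whose two columns, read from bottom to top, are `cr` and `er`. -/
def twoColTab : List β → List β → List (List β)
  | [], _ => []
  | a :: l, [] => [a] :: twoColTab l []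
  | a :: l, b :: m => [a, b] :: twoColTab l m

@[simp] lemma twoColTab_nil_left (er : List β) : twoColTab [] er = [] := by
  cases er <;> rfl

lemma colTab_eq_twoColTab (c : List β) : colTab c = twoColTab c.reverse [] := by
  rw [colTab]
  induction c.reverse with
  | nil => rfl
  | cons a l ih => rw [List.map_cons, ih, twoColTab]

lemma rowRead_colTab (c : List β) : rowRead (colTab c) = c := by
  induction c <;> simp_all [rowRead, colTab]

lemma filterMap_head_twoColTab : ∀ cr er : List β,
    (twoColTab cr er).filterMap (·[0]?) = cr
  | [], _ => by simp
  | _ :: l, [] => by simp [twoColTab, filterMap_head_twoColTab l]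
  | _ :: l, _ :: m => by simp [twoColTab, filterMap_head_twoColTab l m]

lemma filterMap_second_twoColTab : ∀ cr er : List β, er.length ≤ cr.length →
    (twoColTab cr er).filterMap (·[1]?) = er
  | [], er, h => by simpa using h
  | _ :: l, [], _ => by simp [twoColTab, filterMap_second_twoColTab l [] (Nat.zero_le _)]
  | _ :: l, _ :: m, h => by
    simp [twoColTab, filterMap_second_twoColTab l m (by simpa using h)]

end

lemma tabInsert_twoColTab_of_lt : ∀ {cr er : List α} {x : α},
    (x :: cr).Pairwise (· < ·) → er.length ≤ cr.length →
    tabInsert (twoColTab cr er) x = twoColTab (x :: cr) er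
  | [], er, x, _, h => by
    obtain rfl : er = [] := List.eq_nil_of_length_eq_zero (by simpa using h)
    rfl
  | a :: l, er, x, hx, h => by
    have hxa : x < a := List.rel_of_pairwise_cons hx List.mem_cons_self
    have ih := tabInsert_twoColTab_of_lt (er := er.tail) (List.pairwise_cons.1 hx).2
      (by cases er <;> simp_all)
    cases er <;> simp_all [twoColTab, tabInsert, rowInsert, not_le.2 hxa]

lemma tabInsert_twoColTab_cons_nil {c : α} {cr : List α} {x : α} (h : c ≤ x) :
    tabInsert (twoColTab (c :: cr) []) x = twoColTab (c :: cr) [x] := by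
  simp [twoColTab, tabInsert, rowInsert, h]

lemma tabInsert_twoColTab_cons_cons {c e x : α} {cr er : List α} (hc : c ≤ x) (he : x < e) :
    tabInsert (twoColTab (c :: cr) (e :: er)) x = [c, x] :: tabInsert (twoColTab cr er) e := by
  simp [twoColTab, tabInsert, rowInsert, hc, not_le.2 he]

structure IsTwoColTab (cr er : List α) : Prop where
  left : cr.Pairwise (· < ·)
  right : er.Pairwise (· < ·)
  rows : List.Forall₂ (· ≤ ·) (cr.take er.length) er

namespace IsTwoColTab

variable {cr er : List α}

lemma length_le (h : IsTwoColTab cr er) : er.length ≤ cr.length := by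
  have := h.rows.length_eq
  simp only [List.length_take] at this
  omega

lemma cons_left {x : α} (h : IsTwoColTab cr er) (hx : (x :: cr).Pairwise (· < ·)) :
    IsTwoColTab (x :: cr) er :=
  ⟨hx, h.right, List.forall₂_take_cons_of_pairwise (hx.imp le_of_lt) h.rows⟩

lemma cons_cons {c x : α} (h : IsTwoColTab cr er) (hcx : c ≤ x) (hc : ∀ b ∈ cr, c < b)
    (hx : ∀ b ∈ er, x < b) : IsTwoColTab (c :: cr) (x :: er) :=
  ⟨List.pairwise_cons.2 ⟨hc, h.left⟩, List.pairwise_cons.2 ⟨hx, h.right⟩,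
    List.forall₂_cons.2 ⟨hcx, h.rows⟩⟩

lemma tail {c e : α} (h : IsTwoColTab (c :: cr) (e :: er)) : IsTwoColTab cr er :=
  ⟨h.left.of_cons, h.right.of_cons, (List.forall₂_cons.1 h.rows).2⟩

lemma of_append_right : ∀ {u v cr : List α}, IsTwoColTab cr (u ++ v) → IsTwoColTab cr v
  | [], _, _, h => h
  | _ :: _, _, [], h => absurd h.length_le (by simp)
  | _ :: _, _, _ :: _, h => h.tail.of_append_right.cons_left h.left

end IsTwoColTab

lemma tabInsert_twoColTab_eq_of_forall₂ : ∀ {cr er : List α} {x : α},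
    (x :: er).Pairwise (· < ·) → List.Forall₂ (· ≤ ·) (cr.take (er.length + 1)) (x :: er) →
    tabInsert (twoColTab cr er) x = twoColTab cr (x :: er)
  | [], _, _, _, h => by simp at h
  | c :: cr, [], x, _, h => tabInsert_twoColTab_cons_nil (by simpa using h)
  | c :: cr, e :: er, x, hx, h => by
    obtain ⟨hcx, h⟩ := List.forall₂_cons.1 h
    rw [tabInsert_twoColTab_cons_cons hcx (List.rel_of_pairwise_cons hx List.mem_cons_self),
      tabInsert_twoColTab_eq_of_forall₂ hx.of_cons h]
    rfl

lemma insertWord_twoColTab_eq : ∀ {w er cr : List α},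
    IsTwoColTab cr (w.reverse ++ er) → insertWord (twoColTab cr er) w = twoColTab cr (w.reverse ++ er)
  | [], _, _, _ => rfl
  | x :: w, er, cr, h => by
    rw [List.reverse_cons, List.append_assoc, List.singleton_append] at h ⊢
    have hx := h.of_append_right
    rw [insertWord, List.foldl_cons, tabInsert_twoColTab_eq_of_forall₂ hx.right hx.rows]
    exact insertWord_twoColTab_eq h

lemma exists_eq_cons_le_of_not_pairwise_cons {x : α} {l : List α} (hl : l.Pairwise (· < ·))
    (hx : ¬(x :: l).Pairwise (· < ·)) : ∃ c l₀, l = c :: l₀ ∧ c ≤ x := by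
  cases l with
  | nil => exact absurd (List.pairwise_singleton _ x) hx
  | cons c l₀ =>
    refine ⟨c, l₀, rfl, le_of_not_gt fun hxc => hx (List.pairwise_cons.2 ⟨fun b hb => ?_, hl⟩)⟩
    rcases List.mem_cons.1 hb with rfl | hb
    exacts [hxc, hxc.trans (List.rel_of_pairwise_cons hl hb)]

/-- `x` is smaller than the whole second column, so it never starts a third one. -/
lemma IsTwoColTab.exists_tabInsert_eq : ∀ {cr er : List α} {x : α}, IsTwoColTab cr er →
    (∀ b ∈ er, x < b) → ∃ cr' er', tabInsert (twoColTab cr er) x = twoColTab cr' er' ∧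
      IsTwoColTab cr' er' ∧ (∀ b ∈ er', x ≤ b) ∧ (cr' ++ er').Perm (x :: (cr ++ er))
  | cr, er, x, h, hx => by
    by_cases hcol : (x :: cr).Pairwise (· < ·)
    · exact ⟨x :: cr, er, tabInsert_twoColTab_of_lt hcol h.length_le, h.cons_left hcol,
        fun b hb => (hx b hb).le, .refl _⟩
    obtain ⟨c, cr, rfl, hcx⟩ := exists_eq_cons_le_of_not_pairwise_cons h.left hcol
    cases er with
    | nil =>
      refine ⟨c :: cr, [x], tabInsert_twoColTab_cons_nil hcx,
        ⟨h.left, List.pairwise_singleton _ x, by simpa using hcx⟩, by simp, ?_⟩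
      simpa using List.perm_append_singleton x (c :: cr)
    | cons e er =>
      have hxe : x < e := hx e List.mem_cons_self
      obtain ⟨cr', er', heq, htab, hle, hperm⟩ :=
        h.tail.exists_tabInsert_eq (fun b hb => List.rel_of_pairwise_cons h.right hb)
      have hc : ∀ b ∈ cr', c < b := by
        intro b hb
        rcases List.mem_cons.1 (hperm.subset (List.mem_append_left er' hb)) with rfl | hb
        · exact hcx.trans_lt hxe
        rcases List.mem_append.1 hb with hb | hb
        · exact List.rel_of_pairwise_cons h.left hb
        · exact hcx.trans_lt (hxe.trans (List.rel_of_pairwise_cons h.right hb))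
      refine ⟨c :: cr', x :: er', by rw [tabInsert_twoColTab_cons_cons hcx hxe, heq]; rfl,
        htab.cons_cons hcx hc fun b hb => hxe.trans_le (hle b hb), ?_, ?_⟩
      · exact List.forall_mem_cons.2 ⟨le_rfl, fun b hb => hxe.le.trans (hle b hb)⟩
      · exact ((List.perm_middle.trans (hperm.cons x)).cons c).trans
          ((List.Perm.swap x c _).trans ((List.perm_middle.symm.cons c).cons x))

lemma IsTwoColTab.exists_insertWord_eq : ∀ {w cr er : List α}, IsTwoColTab cr er → IsCol w →
    (∀ x ∈ w, ∀ b ∈ er, x < b) →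
    ∃ cr' er', insertWord (twoColTab cr er) w = twoColTab cr' er' ∧ IsTwoColTab cr' er'
  | [], cr, er, h, _, _ => ⟨cr, er, rfl, h⟩
  | x :: w, cr, er, h, hw, hx => by
    obtain ⟨cr₁, er₁, heq, htab, hle, -⟩ := h.exists_tabInsert_eq (hx x List.mem_cons_self)
    obtain ⟨hxw, hw⟩ := List.pairwise_cons.1 hw
    rw [insertWord, List.foldl_cons, heq]
    exact htab.exists_insertWord_eq hw fun y hy b hb => (hxw y hy).trans_le (hle b hb)

lemma sigmaC_eq_of_insertWord {c d cr er : List α}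
    (h : insertWord (twoColTab c.reverse []) d = twoColTab cr er) (hl : er.length ≤ cr.length) :
    sigmaC c d = (cr.reverse, er.reverse) := by
  rw [sigmaC, tabProd, rowRead_colTab, colTab_eq_twoColTab, h]
  simp only [colOf, List.filterMap_reverse, filterMap_head_twoColTab,
    filterMap_second_twoColTab _ _ hl]

lemma colLe_iff_forall₂ {c d : List α} :
    ColLe c d ↔ List.Forall₂ (· ≤ ·) (c.reverse.take d.length) d.reverse := by
  rw [List.take_reverse, List.forall₂_reverse_iff, List.forall₂_iff_get]
  simp only [ColLe, List.length_drop, List.get_eq_getElem, List.getElem_drop]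
  constructor
  · rintro ⟨hl, h⟩
    refine ⟨by omega, fun i _ hi => ?_⟩
    convert h i hi (by omega) using 2
    omega
  · rintro ⟨hl, h⟩
    refine ⟨by omega, fun i hi _ => ?_⟩
    convert h i (by omega) hi using 2
    omega

lemma sigmaC_eq_self_iff {c d : List α} (hc : IsCol c) (hd : IsCol d) :
    sigmaC c d = (c, d) ↔ ColLe c d := by
  have hc' : c.reverse.Pairwise (· < ·) := List.pairwise_reverse.2 hc
  constructor
  · intro h
    obtain ⟨cr, er, hins, htab⟩ :=
      (⟨hc', .nil, .nil⟩ : IsTwoColTab c.reverse []).exists_insertWord_eq hd (by simp)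
    rw [sigmaC_eq_of_insertWord hins htab.length_le, Prod.mk.injEq,
      List.reverse_eq_iff, List.reverse_eq_iff] at h
    rw [h.1, h.2] at htab
    simpa [colLe_iff_forall₂] using htab.rows
  · intro h
    have htab : IsTwoColTab c.reverse (d.reverse ++ []) :=
      ⟨hc', by simpa using List.pairwise_reverse.2 hd, by simpa using colLe_iff_forall₂.1 h⟩
    rw [sigmaC_eq_of_insertWord (insertWord_twoColTab_eq htab) (by simpa using htab.length_le)]
    simp

lemma colLe_nil_left {d : List α} (h : ColLe [] d) : d = [] :=
  List.eq_nil_of_length_eq_zero (Nat.le_zero.1 h.1)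

lemma colLe_nil_right (c : List α) : ColLe c [] :=
  ⟨Nat.zero_le _, fun _ hi => absurd hi (Nat.not_lt_zero _)⟩

lemma isChain_sigmaC_eq_self_iff {w : List (List α)} (hw : ∀ c ∈ w, IsCol c) :
    w.IsChain (fun c d => sigmaC c d = (c, d)) ↔ w.IsChain ColLe :=
  List.IsChain.iff_of_mem_imp fun c d hc hd => sigmaC_eq_self_iff (hw c hc) (hw d hd)

/-- A word in columns is normal for the column braiding `σ_C` if and only if it
consists of a `≼_C`-nondecreasing sequence of non-empty columns (i.e., a Young
tableau) followed by some number of empty columns; so normal words correspond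
to pairs of a Young tableau and a natural number. -/
theorem normal_words_sigmaC (w : List (List α)) :
    ((∀ c ∈ w, IsCol c) ∧ w.Chain' (fun c d => sigmaC c d = (c, d))) ↔
      ∃ (cs : List (List α)) (a : ℕ),
        (∀ c ∈ cs, IsCol c ∧ c ≠ []) ∧ cs.Chain' ColLe ∧
          w = cs ++ List.replicate a ([] : List α) := by
  have hchain {v : List (List α)} :=
    List.isChain_iff_exists_eq_append_replicate (w := v) (fun _ => colLe_nil_left) colLe_nil_right
  constructor
  · rintro ⟨hcol, hw⟩
    obtain ⟨cs, a, hne, hcs, rfl⟩ := hchain.1 ((isChain_sigmaC_eq_self_iff hcol).1 hw)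
    exact ⟨cs, a, fun c hc => ⟨hcol c (List.mem_append_left _ hc), hne c hc⟩, hcs, rfl⟩
  · rintro ⟨cs, a, hcs, hch, rfl⟩
    have hcol : ∀ c ∈ cs ++ List.replicate a [], IsCol c := List.forall_mem_append.2
      ⟨fun c hc => (hcs c hc).1, fun c hc => List.eq_of_mem_replicate hc ▸ List.Pairwise.nil⟩
    exact ⟨hcol, (isChain_sigmaC_eq_self_iff hcol).2
      (hchain.2 ⟨cs, a, fun c hc => (hcs c hc).2, hch, rfl⟩)⟩
end

section
/- For a two-letter alphabet A = {1, 2}, identifying rows with pairs (k, l) ∈ ℕ² (k ones followed by l twos), the row braiding is given by σ_R((k1,l1),(k2,l2)) = ((0, min{l1,k2}), (k1 + k2, l1 + l2 − min{l1,k2})), and this map satisfies the Yang–Baxter equation and is idempotent. -/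
variable {α : Type*} [LinearOrder α]

/-- The row over the two-letter alphabet `{1 < 2} ⊆ ℕ` consisting of `k` ones
followed by `l` twos. -/
def rowOf (k l : ℕ) : List ℕ := List.replicate k 1 ++ List.replicate l 2

/-- The row braiding over a two-letter alphabet, in the parametrization of rows
by pairs in `ℕ²`. -/
def sigmaRTwo (p : (ℕ × ℕ) × (ℕ × ℕ)) : (ℕ × ℕ) × (ℕ × ℕ) :=
  ((0, min p.1.2 p.2.1),
    (p.1.1 + p.2.1, p.1.2 + p.2.2 - min p.1.2 p.2.1))

/-!
Inserting the row `1^k₂ 2^l₂` into the row `1^k₁ 2^l₁` letter by letter, every `1` bumps the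
leftmost `2` of the bottom row (as long as there is one) and that `2` lands at the end of the
top row, while every `2` is appended to the bottom row. Hence the bottom row ends up as
`1^(k₁+k₂) 2^(l₁+l₂-m)` and the top row as `2^m` with `m = min l₁ k₂`. The Yang–Baxter equation
and idempotence of the resulting map on `ℕ²` are identities in `min`, `+` and truncated `-`.
-/

lemma rowRead_rowTab {α : Type*} (r : List α) : rowRead (rowTab r) = r := by
  unfold rowTab
  split_ifs with h <;> simp [rowRead, h]

lemma rowInsert_of_forall_le {r : List α} {x : α} (h : ∀ y ∈ r, y ≤ x) :
    rowInsert r x = (r ++ [x], none) := by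
  induction r with
  | nil => rfl
  | cons y r ih =>
    simp only [List.forall_mem_cons] at h
    simp [rowInsert, h.1, ih h.2]

lemma rowInsert_replicate_append_replicate_succ {x y : α} (hxy : x < y) (a b : ℕ) :
    rowInsert (List.replicate a x ++ List.replicate (b + 1) y) x =
      (List.replicate (a + 1) x ++ List.replicate b y, some y) := by
  induction a with
  | zero => simp [rowInsert, List.replicate_succ, hxy]
  | succ a ih =>
    rw [List.replicate_succ, List.cons_append, rowInsert, if_pos le_rfl, ih]
    rfl

lemma insertWord_cons (t : List (List α)) (x : α) (w : List α) :
    insertWord t (x :: w) = insertWord (tabInsert t x) w := rfl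

lemma insertWord_append (t : List (List α)) (w₁ w₂ : List α) :
    insertWord t (w₁ ++ w₂) = insertWord (insertWord t w₁) w₂ :=
  List.foldl_append

lemma sigmaR_eq_getD_insertWord (r₁ r₂ : List α) :
    sigmaR r₁ r₂ = ((insertWord [r₁] r₂).getD 1 [], (insertWord [r₁] r₂).getD 0 []) := by
  unfold sigmaR tabProd
  rw [rowRead_rowTab]
  by_cases h : r₁ = []
  · subst h
    cases r₂ <;> rfl
  · simp [rowTab, h]

/-- The tableau over `{1 < 2}` with bottom row `1ᵃ2ᵇ` and top row `2ᶜ`; for `c = 0` it has one row,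
as Schensted insertion produces it. -/
def twoLetterTab (a b c : ℕ) : List (List ℕ) :=
  if c = 0 then [rowOf a b] else [rowOf a b, rowOf 0 c]

lemma twoLetterTab_getD_zero (a b c : ℕ) : (twoLetterTab a b c).getD 0 [] = rowOf a b := by
  unfold twoLetterTab
  split_ifs <;> rfl

lemma twoLetterTab_getD_one (a b c : ℕ) : (twoLetterTab a b c).getD 1 [] = rowOf 0 c := by
  unfold twoLetterTab
  split_ifs with hc
  · simp [hc, rowOf]
  · rfl

lemma rowInsert_rowOf_two (a b : ℕ) : rowInsert (rowOf a b) 2 = (rowOf a (b + 1), none) := by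
  rw [rowInsert_of_forall_le, rowOf, rowOf, List.replicate_succ', List.append_assoc]
  simp only [rowOf, List.mem_append, List.mem_replicate]
  omega

lemma rowInsert_rowOf_zero_one (a : ℕ) : rowInsert (rowOf a 0) 1 = (rowOf (a + 1) 0, none) := by
  rw [rowInsert_of_forall_le] <;> simp [rowOf, List.replicate_succ']

lemma rowInsert_rowOf_succ_one (a b : ℕ) :
    rowInsert (rowOf a (b + 1)) 1 = (rowOf (a + 1) b, some 2) :=
  rowInsert_replicate_append_replicate_succ one_lt_two a b

lemma tabInsert_twoLetterTab_two (a b c : ℕ) :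
    tabInsert (twoLetterTab a b c) 2 = twoLetterTab a (b + 1) c := by
  unfold twoLetterTab
  split_ifs <;> simp [tabInsert, rowInsert_rowOf_two]

lemma tabInsert_twoLetterTab_zero_one (a c : ℕ) :
    tabInsert (twoLetterTab a 0 c) 1 = twoLetterTab (a + 1) 0 c := by
  unfold twoLetterTab
  split_ifs <;> simp [tabInsert, rowInsert_rowOf_zero_one]

lemma tabInsert_twoLetterTab_succ_one (a b c : ℕ) :
    tabInsert (twoLetterTab a (b + 1) c) 1 = twoLetterTab (a + 1) b (c + 1) := by
  rw [twoLetterTab, twoLetterTab, if_neg c.succ_ne_zero]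
  split_ifs with hc
  · subst hc
    simp only [tabInsert, rowInsert_rowOf_succ_one]
    rfl
  · simp only [tabInsert, rowInsert_rowOf_succ_one, rowInsert_rowOf_two]

lemma insertWord_twoLetterTab_replicate_two (a b c l : ℕ) :
    insertWord (twoLetterTab a b c) (List.replicate l 2) = twoLetterTab a (b + l) c := by
  induction l generalizing b with
  | zero => rfl
  | succ l ih =>
    rw [List.replicate_succ, insertWord_cons, tabInsert_twoLetterTab_two, ih]
    congr 1
    omega

lemma insertWord_twoLetterTab_replicate_one (a b c k : ℕ) :
    insertWord (twoLetterTab a b c) (List.replicate k 1) =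
      twoLetterTab (a + k) (b - min b k) (c + min b k) := by
  induction k generalizing a b c with
  | zero => simp [insertWord]
  | succ k ih =>
    rw [List.replicate_succ, insertWord_cons]
    cases b with
    | zero => rw [tabInsert_twoLetterTab_zero_one, ih]; congr 1; omega
    | succ b => rw [tabInsert_twoLetterTab_succ_one, ih]; congr 1 <;> omega

lemma insertWord_twoLetterTab_rowOf (a b c k l : ℕ) :
    insertWord (twoLetterTab a b c) (rowOf k l) =
      twoLetterTab (a + k) (b + l - min b k) (c + min b k) := by
  rw [rowOf, insertWord_append, insertWord_twoLetterTab_replicate_one,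
    insertWord_twoLetterTab_replicate_two]
  congr 1
  omega

lemma sigmaR_rowOf_rowOf (k₁ l₁ k₂ l₂ : ℕ) :
    sigmaR (rowOf k₁ l₁) (rowOf k₂ l₂) =
      (rowOf 0 (min l₁ k₂), rowOf (k₁ + k₂) (l₁ + l₂ - min l₁ k₂)) := by
  have h : [rowOf k₁ l₁] = twoLetterTab k₁ l₁ 0 := rfl
  rw [sigmaR_eq_getD_insertWord, h, insertWord_twoLetterTab_rowOf, twoLetterTab_getD_zero,
    twoLetterTab_getD_one, zero_add]

lemma sigmaRTwo_sigmaRTwo (p : (ℕ × ℕ) × (ℕ × ℕ)) : sigmaRTwo (sigmaRTwo p) = sigmaRTwo p := by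
  simp only [sigmaRTwo, Prod.mk.injEq, true_and]
  omega

lemma sigmaRTwo_yangBaxter (p : (ℕ × ℕ) × (ℕ × ℕ) × (ℕ × ℕ)) :
    map12 (fun a b => sigmaRTwo (a, b)) (map23 (fun a b => sigmaRTwo (a, b))
        (map12 (fun a b => sigmaRTwo (a, b)) p)) =
      map23 (fun a b => sigmaRTwo (a, b)) (map12 (fun a b => sigmaRTwo (a, b))
        (map23 (fun a b => sigmaRTwo (a, b)) p)) := by
  simp only [map12, map23, sigmaRTwo, Prod.mk.injEq, true_and]
  omega

/-- For the two-letter alphabet `{1 < 2}`, identifying rows with pairs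
`(k, l) ∈ ℕ²` (`k` ones followed by `l` twos), the row braiding is given by
`σ_R((k₁,l₁),(k₂,l₂)) = ((0, min l₁ k₂), (k₁+k₂, l₁+l₂−min l₁ k₂))`, and this
map satisfies the Yang–Baxter equation and is idempotent. -/
theorem sigmaR_two_letter :
    (∀ k1 l1 k2 l2 : ℕ,
      sigmaR (rowOf k1 l1) (rowOf k2 l2) =
        (rowOf 0 (min l1 k2), rowOf (k1 + k2) (l1 + l2 - min l1 k2))) ∧
    (∀ p : (ℕ × ℕ) × (ℕ × ℕ) × (ℕ × ℕ),
      map12 (fun a b => sigmaRTwo (a, b)) (map23 (fun a b => sigmaRTwo (a, b))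
          (map12 (fun a b => sigmaRTwo (a, b)) p)) =
        map23 (fun a b => sigmaRTwo (a, b)) (map12 (fun a b => sigmaRTwo (a, b))
          (map23 (fun a b => sigmaRTwo (a, b)) p))) ∧
    (∀ p, sigmaRTwo (sigmaRTwo p) = sigmaRTwo p) :=
  ⟨sigmaR_rowOf_rowOf, sigmaRTwo_yangBaxter, sigmaRTwo_sigmaRTwo⟩
end
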